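/- arXiv:1611.01092 — 2 statements merged into one kernel-verified Lean document; each statement's English description precedes it below -/
import Mathlib

section
/- Let k ≥ 1. In the polynomial ring ℚ[x₁,…,x_k,y₁,y₂], set Xᵢ = (y₁+y₂)/2 − xᵢ and Y = (y₁+y₂)²/4 − y₁y₂. Then ∑_{j=0}^{k−1} (−1)^j e_j(x₁,…,x_k) · (∑_{ν=0}^{k−1−j} y₁^ν y₂^{k−1−j−ν}) = ∑_{ν=0}^{⌊(k−1)/2⌋} e_{k−1−2ν}(X₁,…,X_k) · Y^ν, where e_j denotes the elementary symmetric polynomial of degree j (with e₀ = 1). -/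
/-!
Multiply both sides by `y₁ - y₂ ≠ 0`. On the left the geometric sums telescope, and by Vieta the
result is `∏ (y₁ - xᵢ) - ∏ (y₂ - xᵢ)`. With `z = (y₁ - y₂) / 2` we have `y₁ - xᵢ = Xᵢ + z`,
`y₂ - xᵢ = Xᵢ - z` and `Y = z ^ 2`, so this is `∏ (Xᵢ + z) - ∏ (Xᵢ - z)`: twice the odd part in `z`
of the Vieta expansion of `∏ (Xᵢ + z)`, which is `y₁ - y₂` times the right-hand side.
-/

open MvPolynomial Finset

noncomputable section

/-- The variable xᵢ in ℚ[x₁,…,x_k,y₁,y₂]. -/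
def xv (k : ℕ) (i : Fin k) : MvPolynomial (Fin k ⊕ Fin 2) ℚ := X (Sum.inl i)

/-- The variable y_j in ℚ[x₁,…,x_k,y₁,y₂]. -/
def yv (k : ℕ) (j : Fin 2) : MvPolynomial (Fin k ⊕ Fin 2) ℚ := X (Sum.inr j)

/-- The elementary symmetric polynomial e_j(x₁,…,x_k). -/
def ex (k j : ℕ) : MvPolynomial (Fin k ⊕ Fin 2) ℚ :=
  ∑ J ∈ powersetCard j (univ : Finset (Fin k)), ∏ i ∈ J, xv k i

/-- Xᵢ = (y₁+y₂)/2 − xᵢ. -/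
def Xg (k : ℕ) (i : Fin k) : MvPolynomial (Fin k ⊕ Fin 2) ℚ :=
  C (1 / 2 : ℚ) * (yv k 0 + yv k 1) - xv k i

/-- Y = (y₁+y₂)²/4 − y₁y₂. -/
def Yg (k : ℕ) : MvPolynomial (Fin k ⊕ Fin 2) ℚ :=
  C (1 / 4 : ℚ) * (yv k 0 + yv k 1) ^ 2 - yv k 0 * yv k 1

/-- The elementary symmetric polynomial e_j(X₁,…,X_k) in the Xᵢ's. -/
def eX (k j : ℕ) : MvPolynomial (Fin k ⊕ Fin 2) ℚ :=
  ∑ J ∈ powersetCard j (univ : Finset (Fin k)), ∏ i ∈ J, Xg k i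

namespace Finset
variable {R ι : Type*} [CommRing R]

theorem prod_add_eq_sum_esymm (s : Finset ι) (x : ι → R) (y : R) :
    ∏ i ∈ s, (x i + y) = ∑ j ∈ range (#s + 1), (s.val.map x).esymm j * y ^ (#s - j) := by
  have vieta := congrArg (Polynomial.eval y) (Multiset.prod_X_add_C_eq_sum_esymm (s.val.map x))
  simp only [Polynomial.eval_multiset_prod, Multiset.map_map, Function.comp_def,
    Polynomial.eval_add, Polynomial.eval_X, Polynomial.eval_C, Multiset.card_map, card_val,
    Polynomial.eval_finsetSum, Polynomial.eval_mul, Polynomial.eval_pow] at vieta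
  rw [← vieta, prod_eq_multiset_prod]
  simp [add_comm]

theorem prod_sub_eq_sum_esymm (s : Finset ι) (x : ι → R) (y : R) :
    ∏ i ∈ s, (y - x i) =
      ∑ j ∈ range (#s + 1), (-1) ^ j * (s.val.map x).esymm j * y ^ (#s - j) := by
  have map_neg_eq : s.val.map (fun i => -x i) = (s.val.map x).map Neg.neg :=
    (Multiset.map_map _ _ _).symm
  simp only [sub_eq_neg_add, prod_add_eq_sum_esymm, map_neg_eq, Multiset.esymm_neg]

theorem sum_mul_pow_sub_neg_pow (b : ℕ → R) (z : R) (N : ℕ) :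
    ∑ m ∈ range N, b m * (z ^ m - (-z) ^ m) =
      2 * z * ∑ ν ∈ range (N / 2), b (2 * ν + 1) * (z ^ 2) ^ ν := by
  have h_even (n : ℕ) : ∑ m ∈ range (2 * n), b m * (z ^ m - (-z) ^ m) =
      2 * z * ∑ ν ∈ range n, b (2 * ν + 1) * (z ^ 2) ^ ν := by
    induction n with
    | zero => simp
    | succ n ih =>
      rw [mul_add_one, sum_range_succ, sum_range_succ, ih, sum_range_succ,
        (even_two_mul n).neg_pow, (even_two_mul n).add_one.neg_pow]
      ring
  obtain ⟨n, rfl | rfl⟩ := Nat.even_or_odd' N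
  · rw [h_even, Nat.mul_div_cancel_left n two_pos]
  · rw [sum_range_succ, h_even, (even_two_mul n).neg_pow, Nat.mul_add_div two_pos]
    simp

theorem sub_mul_sum_esymm_mul_geom_sum₂ (s : Finset ι) (x : ι → R) (a b : R) :
    (a - b) * ∑ j ∈ range #s, (-1) ^ j * (s.val.map x).esymm j *
        ∑ ν ∈ range (#s - j), a ^ ν * b ^ (#s - 1 - j - ν) =
      ∏ i ∈ s, (a - x i) - ∏ i ∈ s, (b - x i) := by
  rw [prod_sub_eq_sum_esymm, prod_sub_eq_sum_esymm, ← sum_sub_distrib,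
    sum_range_succ, Nat.sub_self, pow_zero, pow_zero, sub_self, add_zero, mul_sum]
  refine sum_congr rfl fun j _ => ?_
  rw [Nat.sub_right_comm #s 1 j, ← mul_sub, ← geom_sum₂_mul]
  ring

theorem prod_add_sub_prod_sub_eq_sum_esymm (s : Finset ι) (x : ι → R) (z : R) :
    ∏ i ∈ s, (x i + z) - ∏ i ∈ s, (x i - z) =
      2 * z * ∑ ν ∈ range ((#s + 1) / 2), (s.val.map x).esymm (#s - 1 - 2 * ν) * (z ^ 2) ^ ν := by
  calc ∏ i ∈ s, (x i + z) - ∏ i ∈ s, (x i - z)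
      = ∑ j ∈ range (#s + 1), (s.val.map x).esymm j * (z ^ (#s - j) - (-z) ^ (#s - j)) := by
        simp_rw [sub_eq_add_neg _ z, prod_add_eq_sum_esymm, ← sum_sub_distrib, ← mul_sub]
    _ = ∑ m ∈ range (#s + 1), (s.val.map x).esymm (#s - m) * (z ^ m - (-z) ^ m) := by
        rw [← sum_range_reflect, add_tsub_cancel_right]
        refine sum_congr rfl fun m hm => ?_
        rw [Nat.sub_sub_self (mem_range_succ_iff.1 hm)]
    _ = _ := by
        simp_rw [sum_mul_pow_sub_neg_pow, Nat.sub_sub, add_comm 1]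

end Finset

/-- Lemma 4.3, first identity: the symmetrized tautological relation R_I for
I = {1,…,k} expressed in the generators Xᵢ and Y. -/
theorem stmt6 (k : ℕ) (hk : 1 ≤ k) :
    ∑ j ∈ range k, (-1 : MvPolynomial (Fin k ⊕ Fin 2) ℚ) ^ j * ex k j *
        (∑ ν ∈ range (k - j), yv k 0 ^ ν * yv k 1 ^ (k - 1 - j - ν)) =
      ∑ ν ∈ range ((k - 1) / 2 + 1), eX k (k - 1 - 2 * ν) * Yg k ^ ν := by
  set z : MvPolynomial (Fin k ⊕ Fin 2) ℚ := C (1 / 2 : ℚ) * (yv k 0 - yv k 1)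
  have two_mul_half : (2 : MvPolynomial (Fin k ⊕ Fin 2) ℚ) * C (1 / 2) = 1 := by
    rw [← map_ofNat C 2, ← C_mul]; norm_num
  have hz : yv k 0 - yv k 1 = 2 * z := by
    linear_combination (yv k 1 - yv k 0) * two_mul_half
  have hy₀ (i : Fin k) : yv k 0 - xv k i = Xg k i + z := by
    unfold Xg; linear_combination (-yv k 0) * two_mul_half
  have hy₁ (i : Fin k) : yv k 1 - xv k i = Xg k i - z := by
    unfold Xg; linear_combination (-yv k 1) * two_mul_half
  have hY : Yg k = z ^ 2 := by
    have quarter : (C (1 / 4 : ℚ) : MvPolynomial (Fin k ⊕ Fin 2) ℚ) = C (1 / 2) ^ 2 := by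
      rw [← C_pow]; norm_num
    unfold Yg
    linear_combination (yv k 0 + yv k 1) ^ 2 * quarter +
      yv k 0 * yv k 1 * (2 * C (1 / 2) + 1) * two_mul_half
  have hy_ne : yv k 0 - yv k 1 ≠ 0 := sub_ne_zero.2 (X_injective.ne (by simp))
  have lhs := sub_mul_sum_esymm_mul_geom_sum₂ univ (xv k) (yv k 0) (yv k 1)
  have rhs := prod_add_sub_prod_sub_eq_sum_esymm univ (Xg k) z
  simp only [card_univ, Fintype.card_fin, esymm_map_val, hy₀, hy₁] at lhs rhs
  rw [show (k + 1) / 2 = (k - 1) / 2 + 1 by omega] at rhs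
  refine mul_left_cancel₀ hy_ne ?_
  simp only [ex, eX]
  rw [lhs, rhs, hY, hz]

end
end

section
/- Let k ≥ 0. In the polynomial ring ℚ[x₁,…,x_k,y₁,y₂], set Xᵢ = (y₁+y₂)/2 − xᵢ and Y = (y₁+y₂)²/4 − y₁y₂. Then (1/2) · ∑_{j=0}^{k} (−1)^j e_j(x₁,…,x_k) · (y₁^{k−j} + y₂^{k−j}) = ∑_{ν=0}^{⌊k/2⌋} e_{k−2ν}(X₁,…,X_k) · Y^ν, where e_j denotes the elementary symmetric polynomial of degree j (with e₀ = 1). -/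
/-!
With u = (y₁ − y₂)/2 one has y₁ − xᵢ = Xᵢ + u, y₂ − xᵢ = Xᵢ − u and u² = Y. By Vieta, the left
side is (∏ᵢ (y₁ − xᵢ) + ∏ᵢ (y₂ − xᵢ))/2 = (∏ᵢ (Xᵢ + u) + ∏ᵢ (Xᵢ − u))/2; expanding both products in
powers of u, the odd powers cancel and the even ones give ∑_ν e_{k−2ν}(X) u^{2ν}.
-/

open MvPolynomial Finset

noncomputable section

section Esymm
variable {ι R : Type*} [CommRing R] (s : Finset ι) (t : ι → R)

theorem Finset.prod_add_eq_sum_esymm_s7 (u : R) :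
    ∏ i ∈ s, (u + t i) =
      ∑ j ∈ range (#s + 1), (∑ J ∈ s.powersetCard j, ∏ i ∈ J, t i) * u ^ (#s - j) := by
  have h := congrArg (Polynomial.eval u) (Multiset.prod_X_add_C_eq_sum_esymm (s.val.map t))
  simpa [Polynomial.eval_multiset_prod, Polynomial.eval_finsetSum, Polynomial.eval_prod,
    Finset.esymm_map_val, Multiset.map_map, Function.comp_def] using h

theorem Finset.prod_sub_eq_sum_esymm_s7 (y : R) :
    ∏ i ∈ s, (y - t i) =
      ∑ j ∈ range (#s + 1), (-1) ^ j * (∑ J ∈ s.powersetCard j, ∏ i ∈ J, t i) * y ^ (#s - j) := by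
  simp_rw [sub_eq_add_neg, s.prod_add_eq_sum_esymm_s7, mul_sum, sum_mul]
  refine sum_congr rfl fun j _ => sum_congr rfl fun J hJ => ?_
  rw [prod_neg, (mem_powersetCard.mp hJ).2]

theorem sum_range_mul_pow_add_neg_pow (b : ℕ → R) (u : R) (n : ℕ) :
    ∑ m ∈ range (n + 1), b m * (u ^ m + (-u) ^ m) =
      2 * ∑ ν ∈ range (n / 2 + 1), b (2 * ν) * (u ^ 2) ^ ν := by
  induction n with
  | zero => simp [one_add_one_eq_two, mul_comm]
  | succ n ih =>
    rw [sum_range_succ, ih]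
    rcases Nat.even_or_odd (n + 1) with ⟨m, hm⟩ | hodd
    · have hdiv : (n + 1) / 2 = n / 2 + 1 := by omega
      have hidx : 2 * (n / 2 + 1) = n + 1 := by omega
      rw [hdiv, sum_range_succ _ (n / 2 + 1), hidx, Even.neg_pow ⟨m, hm⟩, ← pow_mul, hidx]
      ring
    · have hdiv : (n + 1) / 2 = n / 2 := by obtain ⟨m, hm⟩ := hodd; omega
      rw [hdiv, hodd.neg_pow, add_neg_cancel, mul_zero, add_zero]

theorem Finset.prod_add_add_prod_sub_eq_sum_esymm (u : R) :
    ∏ i ∈ s, (t i + u) + ∏ i ∈ s, (t i - u) =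
      2 * ∑ ν ∈ range (#s / 2 + 1),
        (∑ J ∈ s.powersetCard (#s - 2 * ν), ∏ i ∈ J, t i) * (u ^ 2) ^ ν := by
  simp_rw [add_comm (t _) u, sub_eq_neg_add (t _) u, s.prod_add_eq_sum_esymm_s7, ← sum_add_distrib,
    ← mul_add]
  rw [← sum_range_mul_pow_add_neg_pow (fun m => ∑ J ∈ s.powersetCard (#s - m), ∏ i ∈ J, t i),
    ← sum_range_reflect]
  refine sum_congr rfl fun j hj => ?_
  have hj : j < #s + 1 := mem_range.mp hj
  rw [show #s + 1 - 1 - j = #s - j by omega, show #s - (#s - j) = j by omega]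

end Esymm

/-- Lemma 4.3, second identity: the symmetrized tautological relation S_I for
I = {1,…,k} expressed in the generators Xᵢ and Y. -/
theorem stmt7 (k : ℕ) :
    C (1 / 2 : ℚ) * ∑ j ∈ range (k + 1), (-1 : MvPolynomial (Fin k ⊕ Fin 2) ℚ) ^ j * ex k j *
        (yv k 0 ^ (k - j) + yv k 1 ^ (k - j)) =
      ∑ ν ∈ range (k / 2 + 1), eX k (k - 2 * ν) * Yg k ^ ν := by
  have hhalf : (C (1 / 2 : ℚ) : MvPolynomial (Fin k ⊕ Fin 2) ℚ) * 2 = 1 := by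
    rw [← map_ofNat C 2, ← C_mul]; norm_num
  have hquarter : (C (1 / 4 : ℚ) : MvPolynomial (Fin k ⊕ Fin 2) ℚ) = C (1 / 2) ^ 2 := by
    rw [← C_pow]; norm_num
  set u := C (1 / 2 : ℚ) * (yv k 0 - yv k 1)
  have hy₀ : ∀ i, yv k 0 - xv k i = Xg k i + u := fun i => by
    simp only [Xg, u]; linear_combination -yv k 0 * hhalf
  have hy₁ : ∀ i, yv k 1 - xv k i = Xg k i - u := fun i => by
    simp only [Xg, u]; linear_combination -yv k 1 * hhalf
  have hu : u ^ 2 = Yg k := by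
    simp only [Yg, u, hquarter]
    linear_combination -yv k 0 * yv k 1 * (C (1 / 2 : ℚ) * 2 + 1) * hhalf
  have hsum : ∀ y, ∑ j ∈ range (k + 1), (-1) ^ j * ex k j * y ^ (k - j) = ∏ i, (y - xv k i) := by
    intro y
    simpa only [ex, card_univ, Fintype.card_fin] using (univ.prod_sub_eq_sum_esymm_s7 (xv k) y).symm
  simp_rw [mul_add, sum_add_distrib, hsum, hy₀, hy₁]
  rw [univ.prod_add_add_prod_sub_eq_sum_esymm, card_univ, Fintype.card_fin, hu, ← mul_assoc, hhalf,
    one_mul]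
  rfl

end
end
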